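/- arXiv:math/0512500 — 4 statements merged into one kernel-verified Lean document; each statement's English description precedes it below -/
import Mathlib

section
/- Let q be an invertible scalar and x, α nonzero scalars. The assignment E(a) = 0, E(d) = q^{-1}(x + x^{-1}), E(b) = q^{-1}α, E(c) = -q^{-1}α^{-1} extends to an algebra homomorphism (one-dimensional representation) of the reflection algebra L_q(sl(2)), i.e., these values satisfy all defining relations: ac = q^2 ca, ba = q^2 ab, bc - cb = (1-q^{-2})a(d-a), cd - dc = (1-q^{-2})ca, db - bd = (1-q^{-2})ab, ad = da, ad - q^2 cb = 1. -/
/-- A one-dimensional representation of `L_q(sl(2))` is a tuple of scalars satisfying its seven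
defining relations. -/
def ReflectionRelations {K : Type*} [Field K] (q a b c d : K) : Prop :=
  (a * c = q ^ 2 * (c * a)) ∧
  (b * a = q ^ 2 * (a * b)) ∧
  (b * c - c * b = (1 - q ^ (-2 : ℤ)) * (a * (d - a))) ∧
  (c * d - d * c = (1 - q ^ (-2 : ℤ)) * (c * a)) ∧
  (d * b - b * d = (1 - q ^ (-2 : ℤ)) * (a * b)) ∧
  (a * d = d * a) ∧
  (a * d - q ^ 2 * (c * b) = 1)

theorem reflectionRelations_zero_iff {K : Type*} [Field K] (q b c d : K) :
    ReflectionRelations q 0 b c d ↔ q ^ 2 * (c * b) = -1 := by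
  simp only [ReflectionRelations, zero_mul, mul_zero, sub_zero, mul_comm b c, mul_comm c d,
    mul_comm d b, sub_self, zero_sub, true_and, neg_eq_iff_eq_neg]

theorem primitive_representation_relations_general (q α a b c d : ℂ)
    (hq : q ≠ 0) (hα : α ≠ 0)
    (ha : a = 0) (hb : b = q⁻¹ * α) (hc : c = -q⁻¹ * α⁻¹) :
    (a * c = q ^ 2 * (c * a)) ∧
    (b * a = q ^ 2 * (a * b)) ∧
    (b * c - c * b = (1 - q ^ (-2 : ℤ)) * (a * (d - a))) ∧
    (c * d - d * c = (1 - q ^ (-2 : ℤ)) * (c * a)) ∧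
    (d * b - b * d = (1 - q ^ (-2 : ℤ)) * (a * b)) ∧
    (a * d = d * a) ∧
    (a * d - q ^ 2 * (c * b) = 1) := by
  subst ha hb hc
  change ReflectionRelations q 0 _ _ d
  rw [reflectionRelations_zero_iff]
  field_simp

/-- The primitive one-dimensional representation `E_{x,α}` of the reflection algebra
`L_q(sl(2))`: the scalars `a = 0`, `d = q⁻¹(x + x⁻¹)`, `b = q⁻¹ α`, `c = -q⁻¹ α⁻¹`
satisfy all seven defining relations. -/
theorem primitive_representation_relations (q x α a b c d : ℂ)
    (hq : q ≠ 0) (hx : x ≠ 0) (hα : α ≠ 0)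
    (ha : a = 0) (hd : d = q⁻¹ * (x + x⁻¹)) (hb : b = q⁻¹ * α) (hc : c = -q⁻¹ * α⁻¹) :
    (a * c = q ^ 2 * (c * a)) ∧
    (b * a = q ^ 2 * (a * b)) ∧
    (b * c - c * b = (1 - q ^ (-2 : ℤ)) * (a * (d - a))) ∧
    (c * d - d * c = (1 - q ^ (-2 : ℤ)) * (c * a)) ∧
    (d * b - b * d = (1 - q ^ (-2 : ℤ)) * (a * b)) ∧
    (a * d = d * a) ∧
    (a * d - q ^ 2 * (c * b) = 1) :=
  primitive_representation_relations_general q α a b c d hq hα ha hb hc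
end

section
/- Every finite-dimensional irreducible representation Π of the reflection algebra L_q(sl(2)) on which the generator a acts non-invertibly (i.e., ker Π(a) ≠ 0) is one-dimensional, with Π(a) = 0, Π(b)Π(c) = Π(c)Π(b), -q^2 Π(b)Π(c) = 1, and Π(d) scalar. -/
/-!
Since `Π(a)` `q`-commutes with `Π(b)`, `Π(c)` and commutes with `Π(d)`, its kernel is an invariant
subspace; being nonzero, it is everything, so `Π(a) = 0`. The remaining relations then say that
`Π(b)`, `Π(c)`, `Π(d)` commute pairwise with `-q² Π(b)Π(c) = 1`, and by Schur's lemma each of them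
is a scalar, which forces every line to be invariant.
-/

open Module

section

variable {K V : Type*} [Field K] [AddCommGroup V] [Module K V]

def IsIrreducibleSet (S : Set (End K V)) : Prop :=
  ∀ W : Submodule K V, (∀ T ∈ S, ∀ v ∈ W, T v ∈ W) → W = ⊥ ∨ W = ⊤

namespace IsIrreducibleSet

variable {S : Set (End K V)}

theorem eq_top_of_mapsTo (hS : IsIrreducibleSet S) {W : Submodule K V}
    (hW : ∀ T ∈ S, ∀ v ∈ W, T v ∈ W) (hne : W ≠ ⊥) : W = ⊤ :=
  (hS W hW).resolve_left hne

theorem exists_eq_smul_one [IsAlgClosed K] [FiniteDimensional K V] [Nontrivial V]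
    (hS : IsIrreducibleSet S) {X : End K V} (hX : ∀ T ∈ S, Commute X T) :
    ∃ μ : K, X = μ • 1 := by
  obtain ⟨μ, hμ⟩ := X.exists_eigenvalue
  have htop : X.eigenspace μ = ⊤ :=
    hS.eq_top_of_mapsTo (fun T hT => X.mapsTo_genEigenspace_of_comm (hX T hT) μ 1) hμ
  refine ⟨μ, LinearMap.ext fun v => ?_⟩
  simpa using End.mem_eigenspace_iff.mp (htop ▸ Submodule.mem_top : v ∈ X.eigenspace μ)

theorem finrank_eq_one [Nontrivial V] (hS : IsIrreducibleSet S)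
    (hscalar : ∀ T ∈ S, ∃ μ : K, T = μ • 1) : finrank K V = 1 := by
  obtain ⟨v, hv⟩ := exists_ne (0 : V)
  have hspan : K ∙ v = ⊤ := by
    refine hS.eq_top_of_mapsTo (fun T hT w hw => ?_) (by simpa using hv)
    obtain ⟨μ, rfl⟩ := hscalar T hT
    simpa using Submodule.smul_mem _ μ hw
  rw [← finrank_top K V, ← hspan, finrank_span_singleton hv]

end IsIrreducibleSet

theorem LinearMap.mem_ker_of_mul_eq_smul_mul {A Y : End K V} {c : K} (h : A * Y = c • (Y * A))
    {v : V} (hv : v ∈ LinearMap.ker A) : Y v ∈ LinearMap.ker A := by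
  rw [LinearMap.mem_ker] at hv ⊢
  rw [← End.mul_apply, h, LinearMap.smul_apply, End.mul_apply, hv, map_zero, smul_zero]

end

theorem primitive_irreducible_one_dimensional_general (q : ℂ) (hq : q ≠ 0)
    (V : Type*) [AddCommGroup V] [Module ℂ V] [FiniteDimensional ℂ V] [Nontrivial V]
    (A B C D : Module.End ℂ V)
    (h1 : A * C = q ^ 2 • (C * A))
    (h2 : B * A = q ^ 2 • (A * B))
    (h3 : B * C - C * B = (1 - q ^ (-2 : ℤ)) • (A * (D - A)))
    (h4 : C * D - D * C = (1 - q ^ (-2 : ℤ)) • (C * A))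
    (h5 : D * B - B * D = (1 - q ^ (-2 : ℤ)) • (A * B))
    (h6 : A * D = D * A)
    (h7 : A * D - q ^ 2 • (C * B) = 1)
    (hirr : ∀ W : Submodule ℂ V,
        (∀ v ∈ W, A v ∈ W) → (∀ v ∈ W, B v ∈ W) →
        (∀ v ∈ W, C v ∈ W) → (∀ v ∈ W, D v ∈ W) → W = ⊥ ∨ W = ⊤)
    (hker : LinearMap.ker A ≠ ⊥) :
    Module.finrank ℂ V = 1 ∧ A = 0 ∧ B * C = C * B ∧
      (-(q ^ 2)) • (B * C) = 1 ∧ ∃ μ : ℂ, D = μ • (1 : Module.End ℂ V) := by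
  have hS : IsIrreducibleSet ({A, B, C, D} : Set (End ℂ V)) := fun W hW =>
    hirr W (hW A (by simp)) (hW B (by simp)) (hW C (by simp)) (hW D (by simp))
  have hqcomm : ∀ T ∈ ({A, B, C, D} : Set (End ℂ V)), ∃ c : ℂ, A * T = c • (T * A) := by
    have h2' : A * B = (q ^ 2)⁻¹ • (B * A) := by rw [h2, inv_smul_smul₀ (pow_ne_zero 2 hq)]
    rintro T (rfl | rfl | rfl | rfl)
    exacts [⟨1, (one_smul ℂ _).symm⟩, ⟨_, h2'⟩, ⟨_, h1⟩, ⟨1, h6.trans (one_smul ℂ _).symm⟩]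
  have hA : A = 0 := LinearMap.ker_eq_top.mp <| hS.eq_top_of_mapsTo (fun T hT v hv =>
    let ⟨_, hc⟩ := hqcomm T hT; LinearMap.mem_ker_of_mul_eq_smul_mul hc hv) hker
  subst hA
  simp only [zero_mul, mul_zero, smul_zero, sub_eq_zero, zero_sub] at h3 h4 h5 h7
  have hcomm : ∀ X ∈ ({0, B, C, D} : Set (End ℂ V)), ∀ T ∈ ({0, B, C, D} : Set (End ℂ V)),
      Commute X T := by
    rintro X (rfl | rfl | rfl | rfl) T (rfl | rfl | rfl | rfl) <;>
      simp [Commute, SemiconjBy, h3, h4, h5]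
  have hscalar : ∀ X ∈ ({0, B, C, D} : Set (End ℂ V)), ∃ μ : ℂ, X = μ • 1 :=
    fun X hX => hS.exists_eq_smul_one (hcomm X hX)
  refine ⟨hS.finrank_eq_one hscalar, rfl, h3, ?_, hscalar D (by simp)⟩
  rwa [h3, neg_smul]

/-- Every finite-dimensional irreducible representation of the reflection algebra
`L_q(sl(2))` on which the generator `a` acts non-invertibly (its kernel is nonzero)
is one-dimensional, with `Π(a) = 0`, `Π(b)Π(c) = Π(c)Π(b)`, `-q² Π(b)Π(c) = 1` and
`Π(d)` a scalar. -/
theorem primitive_irreducible_one_dimensional (q : ℂ) (hq : q ≠ 0)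
    (hroot : ∀ k : ℕ, k ≠ 0 → q ^ k ≠ 1)
    (V : Type*) [AddCommGroup V] [Module ℂ V] [FiniteDimensional ℂ V] [Nontrivial V]
    (A B C D : Module.End ℂ V)
    (h1 : A * C = q ^ 2 • (C * A))
    (h2 : B * A = q ^ 2 • (A * B))
    (h3 : B * C - C * B = (1 - q ^ (-2 : ℤ)) • (A * (D - A)))
    (h4 : C * D - D * C = (1 - q ^ (-2 : ℤ)) • (C * A))
    (h5 : D * B - B * D = (1 - q ^ (-2 : ℤ)) • (A * B))
    (h6 : A * D = D * A)
    (h7 : A * D - q ^ 2 • (C * B) = 1)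
    (hirr : ∀ W : Submodule ℂ V,
        (∀ v ∈ W, A v ∈ W) → (∀ v ∈ W, B v ∈ W) →
        (∀ v ∈ W, C v ∈ W) → (∀ v ∈ W, D v ∈ W) → W = ⊥ ∨ W = ⊤)
    (hker : LinearMap.ker A ≠ ⊥) :
    Module.finrank ℂ V = 1 ∧ A = 0 ∧ B * C = C * B ∧
      (-(q ^ 2)) • (B * C) = 1 ∧ ∃ μ : ℂ, D = μ • (1 : Module.End ℂ V) :=
  primitive_irreducible_one_dimensional_general q hq V A B C D h1 h2 h3 h4 h5 h6 h7 hirr hker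
end

section
/- Let R^J be an invertible solution of the quantum Yang-Baxter equation R^J_{12} R^J_{13} R^J_{23} = R^J_{23} R^J_{13} R^J_{12} in A⊗A⊗A for an algebra A, and suppose P_1, P_2 (acting in tensor factors) satisfy Δ^J(P) = (R^J_{12})^{-1} P_1 R^J_{12} P_2 where Δ^J is an algebra map intertwined by R^J (i.e., R^J Δ^J(a) = (Δ^J)'(a) R^J for all a). Then P satisfies the reflection equation R^J_{21} P_1 R^J_{12} P_2 = P_2 R^J_{21} P_1 R^J_{12}. -/
open TensorProduct

/-- The embedding `A ⊗ A → A ⊗ A ⊗ A` in the factors 1,2: `a ⊗ b ↦ a ⊗ b ⊗ 1`. -/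
noncomputable def iota12 (A : Type*) [Ring A] [Algebra ℂ A] :
    (A ⊗[ℂ] A) →ₐ[ℂ] A ⊗[ℂ] (A ⊗[ℂ] A) :=
  Algebra.TensorProduct.map (AlgHom.id ℂ A) Algebra.TensorProduct.includeLeft

/-- The embedding `A ⊗ A → A ⊗ A ⊗ A` in the factors 1,3: `a ⊗ b ↦ a ⊗ 1 ⊗ b`. -/
noncomputable def iota13 (A : Type*) [Ring A] [Algebra ℂ A] :
    (A ⊗[ℂ] A) →ₐ[ℂ] A ⊗[ℂ] (A ⊗[ℂ] A) :=
  Algebra.TensorProduct.map (AlgHom.id ℂ A) Algebra.TensorProduct.includeRight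

/-- The embedding `A ⊗ A → A ⊗ A ⊗ A` in the factors 2,3: `a ⊗ b ↦ 1 ⊗ a ⊗ b`. -/
noncomputable def iota23 (A : Type*) [Ring A] [Algebra ℂ A] :
    (A ⊗[ℂ] A) →ₐ[ℂ] A ⊗[ℂ] (A ⊗[ℂ] A) :=
  Algebra.TensorProduct.includeRight

/-! The intertwining relation `R Δ(P) = Δ'(P) R` for `Δ(P) = R⁻¹ P₁ R P₂` reads
`P₁ R P₂ = R₂₁⁻¹ P₂ R₂₁ P₁ R` once `R R⁻¹ = 1` is cancelled on the left; multiplying by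
`R₂₁` on the left gives the reflection equation. -/

theorem mul_eq_mul_of_mul_inv_mul_eq {M : Type*} [Monoid M] {r r' s s' x y : M}
    (hr : r * r' = 1) (hs : s * s' = 1) (h : r * (r' * x) = s' * y * r) :
    s * x = y * r := by
  rw [← mul_assoc, hr, one_mul] at h
  rw [h, ← mul_assoc, ← mul_assoc, hs, one_mul]

theorem Algebra.TensorProduct.comm_conj_tmul {S A : Type*} [CommSemiring S] [Semiring A]
    [Algebra S A] (R Rinv : A ⊗[S] A) (P : A) :
    Algebra.TensorProduct.comm S A A (Rinv * (P ⊗ₜ[S] (1 : A)) * R * ((1 : A) ⊗ₜ[S] P))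
      = Algebra.TensorProduct.comm S A A Rinv * ((1 : A) ⊗ₜ[S] P)
          * Algebra.TensorProduct.comm S A A R * (P ⊗ₜ[S] (1 : A)) := by
  simp only [map_mul, Algebra.TensorProduct.comm_tmul]

theorem reflection_equation_of_coproduct_general (A : Type*) [Ring A] [Algebra ℂ A]
    (R Rinv : A ⊗[ℂ] A) (hR1 : R * Rinv = 1)
    (Δ : A →ₐ[ℂ] A ⊗[ℂ] A)
    (hInt : ∀ a : A, R * Δ a = (Algebra.TensorProduct.comm ℂ A A) (Δ a) * R)
    (P : A)
    (hP : Δ P = Rinv * (P ⊗ₜ[ℂ] (1 : A)) * R * ((1 : A) ⊗ₜ[ℂ] P)) :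
    (Algebra.TensorProduct.comm ℂ A A) R * (P ⊗ₜ[ℂ] (1 : A)) * R * ((1 : A) ⊗ₜ[ℂ] P)
      = ((1 : A) ⊗ₜ[ℂ] P) * (Algebra.TensorProduct.comm ℂ A A) R
          * (P ⊗ₜ[ℂ] (1 : A)) * R := by
  set τ := Algebra.TensorProduct.comm ℂ A A
  have hτR : τ R * τ Rinv = 1 := by rw [← map_mul, hR1, map_one]
  have hIntP := hInt P
  rw [hP, Algebra.TensorProduct.comm_conj_tmul] at hIntP
  have hReflection : τ R * (P ⊗ₜ[ℂ] (1 : A) * R * (1 : A) ⊗ₜ[ℂ] P)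
      = (1 : A) ⊗ₜ[ℂ] P * τ R * P ⊗ₜ[ℂ] (1 : A) * R :=
    mul_eq_mul_of_mul_inv_mul_eq hR1 hτR (by simpa only [mul_assoc] using hIntP)
  simpa only [mul_assoc] using hReflection

/-- Let `R` be an invertible solution of the quantum Yang–Baxter equation, let `Δ` be
an algebra map intertwined by `R` (`R Δ(a) = Δ'(a) R`), and suppose
`Δ(P) = R⁻¹ P₁ R P₂`.  Then `P` satisfies the reflection equation
`R₂₁ P₁ R₁₂ P₂ = P₂ R₂₁ P₁ R₁₂`. -/
theorem reflection_equation_of_coproduct (A : Type*) [Ring A] [Algebra ℂ A]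
    (R Rinv : A ⊗[ℂ] A) (hR1 : R * Rinv = 1) (hR2 : Rinv * R = 1)
    (hYBE : iota12 A R * iota13 A R * iota23 A R
          = iota23 A R * iota13 A R * iota12 A R)
    (Δ : A →ₐ[ℂ] A ⊗[ℂ] A)
    (hInt : ∀ a : A, R * Δ a = (Algebra.TensorProduct.comm ℂ A A) (Δ a) * R)
    (P : A)
    (hP : Δ P = Rinv * (P ⊗ₜ[ℂ] (1 : A)) * R * ((1 : A) ⊗ₜ[ℂ] P)) :
    (Algebra.TensorProduct.comm ℂ A A) R * (P ⊗ₜ[ℂ] (1 : A)) * R * ((1 : A) ⊗ₜ[ℂ] P)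
      = ((1 : A) ⊗ₜ[ℂ] P) * (Algebra.TensorProduct.comm ℂ A A) R
          * (P ⊗ₜ[ℂ] (1 : A)) * R :=
  reflection_equation_of_coproduct_general A R Rinv hR1 Δ hInt P hP
end

section
/- Suppose F(x) and F'(x) are both invertible solutions of the ABRR equation F_{12}(x) B_2(x) = R̂^{-1}_{12} B_2(x) F_{12}(x), acting on a tensor product V⊗W of finite-dimensional h-semisimple modules, and suppose both are of the form 1⊗1 + (strictly lower triangular in the second factor), i.e., F - 1 maps W[μ] into ⊕_{μ'<μ} V ⊗ W[μ'] with coefficients rational in the parameters. If the eigenvalues b(λ) of B(x) on distinct weight spaces are distinct rational functions (b(λ) ≠ b(μ) for λ ≠ μ), then F = F'. -/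
/-!
Both `F` and `F'` conjugate `B` into `R̂⁻¹ B`, so `X = F⁻¹ F'` commutes with `B`. Operators that
strictly lower the weight are closed under sums and products, and the inverse of `1 + (strictly
lowering)` is again of this form (by well-founded induction on the weight), so `X - 1` strictly
lowers the weight: its diagonal blocks vanish. Since `X - 1` commutes with `B`, its block `(λ, μ)`
is killed by `b λ - b μ`, so the off-diagonal blocks vanish too. Hence `X = 1`.
-/

namespace CompleteOrthogonalIdempotents

variable {R ι : Type*} [Ring R] [Fintype ι] {e : ι → R}

theorem mul_eq_sum_mul_mul (he : CompleteOrthogonalIdempotents e) (x y : R) :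
    x * y = ∑ k, x * e k * (e k * y) := by
  conv_lhs => rw [← mul_one x, ← he.complete, Finset.mul_sum, Finset.sum_mul]
  refine Finset.sum_congr rfl fun k _ => ?_
  rw [← mul_assoc, mul_assoc x (e k) (e k), (he.idem k).eq]

theorem eq_zero_of_forall_mul_mul_eq_zero (he : CompleteOrthogonalIdempotents e) {x : R}
    (h : ∀ i j, e i * x * e j = 0) : x = 0 :=
  calc x = (∑ i, e i) * x * ∑ j, e j := by rw [he.complete, one_mul, mul_one]
    _ = ∑ i, ∑ j, e i * x * e j := by
      simp only [Finset.sum_mul, Finset.mul_sum]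
      exact Finset.sum_comm
    _ = 0 := Finset.sum_eq_zero fun i _ => Finset.sum_eq_zero fun j _ => h i j

theorem mul_sum_smul {𝕜 : Type*} [CommSemiring 𝕜] [Algebra 𝕜 R]
    (he : CompleteOrthogonalIdempotents e) (b : ι → 𝕜) (i : ι) :
    e i * ∑ k, b k • e k = b i • e i := by
  classical
  simp_rw [Finset.mul_sum, mul_smul_comm, he.mul_eq, smul_ite, smul_zero]
  simp

theorem sum_smul_mul {𝕜 : Type*} [CommSemiring 𝕜] [Algebra 𝕜 R]
    (he : CompleteOrthogonalIdempotents e) (b : ι → 𝕜) (j : ι) :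
    (∑ k, b k • e k) * e j = b j • e j := by
  classical
  simp_rw [Finset.sum_mul, smul_mul_assoc, he.mul_eq, smul_ite, smul_zero]
  simp

theorem mul_mul_eq_zero_of_commute {𝕜 : Type*} [Field 𝕜] [Algebra 𝕜 R]
    (he : CompleteOrthogonalIdempotents e) {b : ι → 𝕜} {i j : ι} (hb : b i ≠ b j) {x : R}
    (hx : Commute (∑ k, b k • e k) x) : e i * x * e j = 0 := by
  have h : b i • (e i * x * e j) = b j • (e i * x * e j) :=
    calc b i • (e i * x * e j) = e i * (∑ k, b k • e k) * x * e j := by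
          rw [he.mul_sum_smul, smul_mul_assoc, smul_mul_assoc]
      _ = e i * x * ((∑ k, b k • e k) * e j) := by rw [mul_assoc (e i), hx.eq]; noncomm_ring
      _ = b j • (e i * x * e j) := by rw [he.sum_smul_mul, mul_smul_comm]
  rw [← sub_eq_zero, ← sub_smul] at h
  exact (smul_eq_zero.mp h).resolve_left (sub_ne_zero.mpr hb)

end CompleteOrthogonalIdempotents

/-- `x` maps the image of `e j` into the sum of the images of the `e i` with `i < j`. -/
def IsStrictlyLowering {R ι : Type*} [Mul R] [Zero R] [LT ι] (e : ι → R) (x : R) : Prop :=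
  ∀ j i, ¬ i < j → e i * x * e j = 0

namespace IsStrictlyLowering

variable {R ι : Type*} [Ring R] [Preorder ι] {e : ι → R} {x y : R}

theorem add (hx : IsStrictlyLowering e x) (hy : IsStrictlyLowering e y) :
    IsStrictlyLowering e (x + y) := fun j i hij => by
  rw [mul_add, add_mul, hx j i hij, hy j i hij, add_zero]

variable [Fintype ι]

theorem mul (he : CompleteOrthogonalIdempotents e) (hx : IsStrictlyLowering e x)
    (hy : IsStrictlyLowering e y) : IsStrictlyLowering e (x * y) := fun j i hij => by
  rw [← mul_assoc, mul_assoc, he.mul_eq_sum_mul_mul]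
  refine Finset.sum_eq_zero fun k _ => ?_
  by_cases hik : i < k
  · rw [← mul_assoc (e k), hy j k fun hkj => hij (hik.trans hkj), mul_zero]
  · rw [hx k i hik, zero_mul]

theorem mul_sub_one (he : CompleteOrthogonalIdempotents e) (hx : IsStrictlyLowering e (x - 1))
    (hy : IsStrictlyLowering e (y - 1)) : IsStrictlyLowering e (x * y - 1) := by
  have h : x * y - 1 = (x - 1) * (y - 1) + (x - 1) + (y - 1) := by noncomm_ring
  exact h ▸ ((hx.mul he hy).add hx).add hy

theorem sub_one_of_mul_eq_one (he : CompleteOrthogonalIdempotents e)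
    (hx : IsStrictlyLowering e (x - 1)) (hyx : y * x = 1) : IsStrictlyLowering e (y - 1) := by
  intro j
  induction j using WellFoundedLT.induction with
  | ind j ih =>
    intro i hij
    have hy : y - 1 = -(y * (x - 1)) := by rw [mul_sub, hyx, mul_one, neg_sub]
    rw [hy, mul_neg, neg_mul, neg_eq_zero, ← mul_assoc, mul_assoc, he.mul_eq_sum_mul_mul]
    refine Finset.sum_eq_zero fun k _ => ?_
    by_cases hkj : k < j
    · have hik : ¬ i < k := fun hik => hij (hik.trans hkj)
      have hik' : i ≠ k := by rintro rfl; exact hij hkj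
      have hyik : e i * y * e k = e i * (y - 1) * e k + e i * e k := by noncomm_ring
      rw [hyik, ih k hkj i hik, he.ortho hik', add_zero, zero_mul]
    · rw [← mul_assoc (e k), hx j k hkj, mul_zero]

theorem eq_zero_of_commute {𝕜 : Type*} [Field 𝕜] [Algebra 𝕜 R]
    (he : CompleteOrthogonalIdempotents e) {b : ι → 𝕜} (hb : Function.Injective b)
    (hx : IsStrictlyLowering e x) (hxb : Commute (∑ k, b k • e k) x) : x = 0 :=
  he.eq_zero_of_forall_mul_mul_eq_zero fun i j => by
    rcases eq_or_ne i j with rfl | hij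
    · exact hx i i (lt_irrefl i)
    · exact he.mul_mul_eq_zero_of_commute (hb.ne hij) hxb

end IsStrictlyLowering

theorem abrr_uniqueness_general (𝕜 : Type*) [Field 𝕜] (U : Type*) [AddCommGroup U] [Module 𝕜 U]
    (ι : Type*) [Fintype ι] [PartialOrder ι]
    (p : ι → Module.End 𝕜 U)
    (hsum : ∑ i, p i = 1)
    (horth : ∀ i j, i ≠ j → p i * p j = 0)
    (b : ι → 𝕜) (hb : ∀ i j, i ≠ j → b i ≠ b j)
    (B : Module.End 𝕜 U) (hB : B = ∑ i, b i • p i)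
    (Rinv : Module.End 𝕜 U)
    (F F' : Module.End 𝕜 U) (hF : IsUnit F)
    (habrr : F * B = Rinv * B * F) (habrr' : F' * B = Rinv * B * F')
    (htri : ∀ μ μ', ¬ μ' < μ → p μ' * (F - 1) * p μ = 0)
    (htri' : ∀ μ μ', ¬ μ' < μ → p μ' * (F' - 1) * p μ = 0) :
    F = F' := by
  obtain ⟨u, rfl⟩ := hF
  have hp : CompleteOrthogonalIdempotents p :=
    CompleteOrthogonalIdempotents.iff_ortho_complete.mpr ⟨horth, hsum⟩
  have hinv : IsStrictlyLowering p (↑u⁻¹ - 1) :=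
    IsStrictlyLowering.sub_one_of_mul_eq_one hp htri u.inv_mul
  have hcomm : Commute B (↑u⁻¹ * F') :=
    ((SemiconjBy.units_inv_symm_left habrr).mul_left habrr').symm
  have hone : ↑u⁻¹ * F' = 1 := sub_eq_zero.mp <|
    (hinv.mul_sub_one hp htri').eq_zero_of_commute hp
      (fun i j h => by_contra fun hij => hb i j hij h)
      (hB ▸ hcomm.sub_right (Commute.one_right B))
  rw [← u.mul_inv_cancel_left F', hone, mul_one]

/-- Uniqueness of solutions of the ABRR equation.  Here `U` stands for `V ⊗ W`, the
finite index type `ι` with its partial order indexes the weights of `W`, `p μ`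
is the projection onto `V ⊗ W[μ]`, and `B = ∑ b μ • p μ` acts by the scalar `b μ`
on `V ⊗ W[μ]`, with `b λ ≠ b μ` for `λ ≠ μ`.  If `F` and `F'` are invertible,
satisfy the ABRR equation `F B = R̂⁻¹ B F`, and are strictly lower triangular in the
second factor (`F - 1` maps `W[μ]` into the spaces `W[μ']` with `μ' < μ`),
then `F = F'`. -/
theorem abrr_uniqueness (𝕜 : Type*) [Field 𝕜] (U : Type*) [AddCommGroup U] [Module 𝕜 U]
    (ι : Type*) [Fintype ι] [PartialOrder ι]
    (p : ι → Module.End 𝕜 U)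
    (hsum : ∑ i, p i = 1)
    (hidem : ∀ i, p i * p i = p i)
    (horth : ∀ i j, i ≠ j → p i * p j = 0)
    (b : ι → 𝕜) (hb : ∀ i j, i ≠ j → b i ≠ b j)
    (B : Module.End 𝕜 U) (hB : B = ∑ i, b i • p i)
    (Rhat Rinv : Module.End 𝕜 U) (hR : Rhat * Rinv = 1) (hR' : Rinv * Rhat = 1)
    (F F' : Module.End 𝕜 U) (hF : IsUnit F) (hF' : IsUnit F')
    (habrr : F * B = Rinv * B * F) (habrr' : F' * B = Rinv * B * F')
    (htri : ∀ μ μ', ¬ μ' < μ → p μ' * (F - 1) * p μ = 0)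
    (htri' : ∀ μ μ', ¬ μ' < μ → p μ' * (F' - 1) * p μ = 0) :
    F = F' :=
  abrr_uniqueness_general 𝕜 U ι p hsum horth b hb B hB Rinv F F' hF habrr habrr' htri htri'
end
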